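/- arXiv:2103.02628 — 3 statements merged into one kernel-verified Lean document; each statement's English description precedes it below -/
import Mathlib

section
/- Non-negativity of entropy production implies positivity constraints: if for all E, g ∈ ℝ² the quantity (1/T) Eᵀ σ E + (1/T²) gᵀ κ g − (2/T) Eᵀ ν^S g ≥ 0 (with T > 0), then σ^S and κ^S are positive semi-definite, and moreover if σ^S = 0 then ν^S = 0. -/
/-!
Taking `g = 0`, resp. `E = 0`, isolates the quadratic forms of `σ` and `κ`, which are those of
their symmetric parts. When `σ^S = 0` the entropy production is affine in `E`, so its linear part
`E ↦ Eᵀ ν^S g` is bounded above and therefore vanishes.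
-/

open Matrix

lemma eq_zero_of_forall_mul_le {R : Type*} [Field R] [LinearOrder R] [IsStrictOrderedRing R]
    {a c : R} (h : ∀ t, t * a ≤ c) : a = 0 := by
  by_contra ha
  have := h ((c + 1) / a)
  rw [div_mul_cancel₀ _ ha] at this
  linarith

namespace Matrix

variable {m n R : Type*} [Field R]

abbrev symmPart (A : Matrix n n R) : Matrix n n R := (2 : R)⁻¹ • (A + Aᵀ)

lemma isSymm_symmPart (A : Matrix n n R) : A.symmPart.IsSymm := by
  rw [IsSymm, transpose_smul, transpose_add, transpose_transpose, add_comm]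

variable [Fintype n]

lemma dotProduct_symmPart_mulVec [NeZero (2 : R)] (A : Matrix n n R) (x : n → R) :
    x ⬝ᵥ A.symmPart *ᵥ x = x ⬝ᵥ A *ᵥ x := by
  have htranspose : x ⬝ᵥ Aᵀ *ᵥ x = x ⬝ᵥ A *ᵥ x := by
    rw [mulVec_transpose, dotProduct_comm, dotProduct_mulVec]
  rw [smul_mulVec, dotProduct_smul, add_mulVec, dotProduct_add, htranspose, ← two_mul,
    smul_eq_mul, inv_mul_cancel_left₀ two_ne_zero]

lemma posSemidef_symmPart_iff [PartialOrder R] [StarRing R] [TrivialStar R] [NeZero (2 : R)]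
    (A : Matrix n n R) : A.symmPart.PosSemidef ↔ ∀ x, 0 ≤ x ⬝ᵥ A *ᵥ x := by
  simp only [posSemidef_iff_dotProduct_mulVec, star_trivial, dotProduct_symmPart_mulVec,
    isHermitian_iff_isSymm, isSymm_symmPart, true_and]

/-- Testing with `E = t • B g` bounds `t * ‖B g‖²` above for every `t`. -/
lemma eq_zero_of_forall_dotProduct_mulVec_le [Fintype m] [LinearOrder R] [IsStrictOrderedRing R]
    (B : Matrix m n R) (c : (n → R) → R) (h : ∀ E g, E ⬝ᵥ B *ᵥ g ≤ c g) : B = 0 := by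
  refine ext_iff_mulVec.mpr fun g => ?_
  have hsq : B *ᵥ g ⬝ᵥ B *ᵥ g = 0 :=
    eq_zero_of_forall_mul_le fun t => by simpa [smul_dotProduct] using h (t • B *ᵥ g) g
  rw [dotProduct_self_eq_zero.mp hsq, zero_mulVec]

end Matrix

/-- Non-negativity of the entropy production rate implies that the symmetric parts `σ^S`
and `κ^S` are positive semi-definite, and if `σ^S = 0` then `ν^S = 0`. -/
theorem entropy_production_nonneg_constraints (σ κ ν : Matrix (Fin 2) (Fin 2) ℝ)
    (T : ℝ) (hT : 0 < T)
    (hpos : ∀ E g : Fin 2 → ℝ,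
      0 ≤ (1 / T) * (E ⬝ᵥ σ *ᵥ E) + (1 / T ^ 2) * (g ⬝ᵥ κ *ᵥ g)
        - (2 / T) * (E ⬝ᵥ ((2 : ℝ)⁻¹ • (ν + νᵀ)) *ᵥ g)) :
    ((2 : ℝ)⁻¹ • (σ + σᵀ)).PosSemidef ∧ ((2 : ℝ)⁻¹ • (κ + κᵀ)).PosSemidef ∧
      ((2 : ℝ)⁻¹ • (σ + σᵀ) = 0 → (2 : ℝ)⁻¹ • (ν + νᵀ) = 0) := by
  refine ⟨σ.posSemidef_symmPart_iff.mpr fun E => ?_, κ.posSemidef_symmPart_iff.mpr fun g => ?_,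
    fun hσ => ?_⟩
  · simpa [hT] using hpos E 0
  · simpa [hT] using hpos 0 g
  · have hσE : ∀ E, E ⬝ᵥ σ *ᵥ E = 0 := fun E => by
      rw [← dotProduct_symmPart_mulVec, symmPart, hσ, zero_mulVec, dotProduct_zero]
    have hνS : (2 / T) • ν.symmPart = 0 :=
      eq_zero_of_forall_dotProduct_mulVec_le _ (fun g => (1 / T ^ 2) * (g ⬝ᵥ κ *ᵥ g))
        fun E g => by
          have h := hpos E g
          rw [hσE, mul_zero, zero_add] at h
          rw [smul_mulVec, dotProduct_smul, smul_eq_mul]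
          exact sub_nonneg.mp h
    exact (smul_eq_zero.mp hνS).resolve_left (by positivity)
end

section
/- Suppose E : I → ℝ, N : I → ℝ, μ ∈ ℝ, T > 0, and set h_i = E_i − μN_i. Let ρ be a diagonal density matrix with entries ρ_{ii} = e^{-h_i/T}/Z where Z = Σ_i e^{-h_i/T}, and let σ be a Hermitian density matrix with the same spectrum as ρ. Then Σ_i h_i σ_{ii} ≥ Σ_i h_i ρ_{ii}, i.e. ΔE − μ ΔN ≥ 0 where ΔE = Σ_i E_i(σ_{ii} − ρ_{ii}) and ΔN = Σ_i N_i(σ_{ii} − ρ_{ii}). -/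
open Matrix

/-!
Conjugating the diagonal Gibbs state by a unitary `V` gives `σ_ii = ∑_j B_ij p_j`, where
`B_ij = |V_ij|²` is doubly stochastic and `p = q / Z`, `q_i = exp(-h_i/T)`. Since
`h_i = -T log q_i`, the claim becomes `∑_i log q_i (B q)_i ≤ ∑_i log q_i q_i`. This follows by
weighting the tangent-line inequality `log q_i (q_j - q_i) ≤ f q_j - f q_i` of the convex
`f x = x log x - x` with `B_ij` and summing: the right-hand side sums to zero because the rows and
the columns of `B` sum to one.
-/

/-- The tangent-line inequality for the convex function `x ↦ x log x - x` at `x`. -/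
theorem Real.log_mul_sub_le {x y : ℝ} (hx : 0 < x) (hy : 0 < y) :
    Real.log x * (y - x) ≤ (y * Real.log y - y) - (x * Real.log x - x) := by
  have h := mul_le_mul_of_nonneg_left (Real.log_le_sub_one_of_pos (div_pos hx hy)) hy.le
  rw [Real.log_div hx.ne' hy.ne', mul_sub_one, mul_div_cancel₀ _ hy.ne'] at h
  linarith

namespace Matrix

variable {n 𝕜 : Type*} [Fintype n] [DecidableEq n] [RCLike 𝕜]

theorem sum_norm_sq_row_of_mem_unitaryGroup {V : Matrix n n 𝕜} (hV : V ∈ unitaryGroup n 𝕜)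
    (i : n) : ∑ j, ‖V i j‖ ^ 2 = 1 := by
  have h := congr_fun (congr_fun (mem_unitaryGroup_iff.mp hV) i) i
  simp only [mul_apply, star_apply, RCLike.star_def, RCLike.mul_conj, one_apply_eq] at h
  exact_mod_cast h

theorem sum_norm_sq_col_of_mem_unitaryGroup {V : Matrix n n 𝕜} (hV : V ∈ unitaryGroup n 𝕜)
    (j : n) : ∑ i, ‖V i j‖ ^ 2 = 1 := by
  have h := congr_fun (congr_fun (mem_unitaryGroup_iff'.mp hV) j) j
  simp only [mul_apply, star_apply, RCLike.star_def, RCLike.conj_mul, one_apply_eq] at h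
  exact_mod_cast h

theorem norm_sq_mem_doublyStochastic {V : Matrix n n 𝕜} (hV : V ∈ unitaryGroup n 𝕜) :
    (of fun i j => ‖V i j‖ ^ 2) ∈ doublyStochastic ℝ n :=
  mem_doublyStochastic_iff_sum.mpr ⟨fun _ _ => sq_nonneg _,
    sum_norm_sq_row_of_mem_unitaryGroup hV, sum_norm_sq_col_of_mem_unitaryGroup hV⟩

theorem mul_diagonal_mul_conjTranspose_apply_self (V : Matrix n n 𝕜) (d : n → ℝ) (i : n) :
    (V * diagonal (fun j => (d j : 𝕜)) * Vᴴ) i i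
      = (((of fun i j => ‖V i j‖ ^ 2) *ᵥ d) i : ℝ) := by
  rw [mul_apply]
  simp only [mul_diagonal, conjTranspose_apply, RCLike.star_def, mulVec, dotProduct, of_apply]
  push_cast
  refine Finset.sum_congr rfl fun j _ => ?_
  rw [← RCLike.mul_conj]; ring

theorem sum_log_mul_mulVec_le {B : Matrix n n ℝ} (hB : B ∈ doublyStochastic ℝ n)
    {q : n → ℝ} (hq : ∀ i, 0 < q i) :
    ∑ i, Real.log (q i) * (B *ᵥ q) i ≤ ∑ i, Real.log (q i) * q i := by
  set f : ℝ → ℝ := fun x => x * Real.log x - x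
  have hpair : ∀ i j,
      B i j * (Real.log (q i) * (q j - q i)) ≤ B i j * (f (q j) - f (q i)) :=
    fun i j => mul_le_mul_of_nonneg_left (Real.log_mul_sub_le (hq i) (hq j))
      (nonneg_of_mem_doublyStochastic hB)
  have htel : ∑ i, ∑ j, B i j * (f (q j) - f (q i)) = 0 := by
    simp only [mul_sub, Finset.sum_sub_distrib, ← Finset.sum_mul,
      sum_row_of_mem_doublyStochastic hB]
    rw [Finset.sum_comm]
    simp [← Finset.sum_mul, sum_col_of_mem_doublyStochastic hB]
  have hrow : ∀ i, ∑ j, B i j * (Real.log (q i) * (q j - q i))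
      = Real.log (q i) * (B *ᵥ q) i - Real.log (q i) * q i := by
    intro i
    rw [mulVec, dotProduct, ← mul_one (Real.log (q i) * q i),
      ← sum_row_of_mem_doublyStochastic hB i, Finset.mul_sum, Finset.mul_sum,
      ← Finset.sum_sub_distrib]
    exact Finset.sum_congr rfl fun j _ => by ring
  calc ∑ i, Real.log (q i) * (B *ᵥ q) i
      = ∑ i, Real.log (q i) * q i + ∑ i, ∑ j, B i j * (Real.log (q i) * (q j - q i)) := by
        simp only [hrow, Finset.sum_sub_distrib]; ring
    _ ≤ ∑ i, Real.log (q i) * q i + ∑ i, ∑ j, B i j * (f (q j) - f (q i)) :=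
        add_le_add_right (Finset.sum_le_sum fun i _ => Finset.sum_le_sum fun j _ => hpair i j) _
    _ = ∑ i, Real.log (q i) * q i := by rw [htel, add_zero]

end Matrix

/-- Grand canonical free-energy inequality: if `ρ` is the Gibbs state with diagonal entries
`e^{-(E_i − μN_i)/T}/Z` and `σ = V ρ V†` for a unitary `V`, then
`Σ_i (E_i − μN_i) σ_{ii} ≥ Σ_i (E_i − μN_i) ρ_{ii}`, i.e. `ΔE − μΔN ≥ 0`. -/
theorem edge_free_energy_inequality {I : Type*} [Fintype I] [DecidableEq I]
    (E N : I → ℝ) (μ T : ℝ) (hT : 0 < T)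
    (Z : ℝ) (hZ : Z = ∑ i, Real.exp (-(E i - μ * N i) / T))
    (ρ : Matrix I I ℂ)
    (hρ : ρ = Matrix.diagonal fun i => ((Real.exp (-(E i - μ * N i) / T) / Z : ℝ) : ℂ))
    (σ : Matrix I I ℂ)
    (hσ : ∃ V : Matrix I I ℂ, V ∈ Matrix.unitaryGroup I ℂ ∧ σ = V * ρ * Vᴴ) :
    ∑ i, (E i - μ * N i) * (σ i i).re
      ≥ ∑ i, (E i - μ * N i) * (Real.exp (-(E i - μ * N i) / T) / Z) := by
  obtain ⟨V, hV, rfl⟩ := hσ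
  subst hρ
  set q : I → ℝ := fun i => Real.exp (-(E i - μ * N i) / T)
  set B : Matrix I I ℝ := of fun i j => ‖V i j‖ ^ 2
  have hdiag : ∀ i,
      ((V * diagonal (fun i => ((q i / Z : ℝ) : ℂ)) * Vᴴ) i i).re = (B *ᵥ q) i / Z := by
    intro i
    have h := mul_diagonal_mul_conjTranspose_apply_self V (fun i => q i / Z) i
    simp only [← RCLike.ofReal_eq_complex_ofReal] at h ⊢
    rw [h, ← RCLike.re_to_complex, RCLike.ofReal_re]
    simp only [mulVec, dotProduct, Finset.sum_div, mul_div_assoc]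
    rfl
  have hh : ∀ i, E i - μ * N i = -T * Real.log (q i) := by
    intro i; simp only [q, Real.log_exp]; field_simp
  have hZ0 : 0 ≤ Z := hZ ▸ Finset.sum_nonneg fun i _ => (Real.exp_pos _).le
  calc ∑ i, (E i - μ * N i) * ((V * diagonal (fun i => ((q i / Z : ℝ) : ℂ)) * Vᴴ) i i).re
      = -(T / Z) * ∑ i, Real.log (q i) * (B *ᵥ q) i := by
        simp only [hdiag, hh, Finset.mul_sum]; exact Finset.sum_congr rfl fun i _ => by ring
    _ ≥ -(T / Z) * ∑ i, Real.log (q i) * q i :=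
        mul_le_mul_of_nonpos_left
          (sum_log_mul_mulVec_le (norm_sq_mem_doublyStochastic hV) fun i => Real.exp_pos _)
          (neg_nonpos.mpr (div_nonneg hT.le hZ0))
    _ = ∑ i, (E i - μ * N i) * (q i / Z) := by
        simp only [hh, Finset.mul_sum]; exact Finset.sum_congr rfl fun i _ => by ring
end

section
/- Under the hypotheses of the edge free-energy inequality (σ = VρV† with ρ the Gibbs state at temperature T, chemical potential μ), the entropy changes satisfy T·ΔS := (ΔE − μΔN) ≥ 0; combining this for two independent subsystems (top and bottom edges, each with its own T, μ), if additionally ΔS_t = −ΔS_b (pumping entropy from one edge to the other), then ΔS_t = ΔS_b = 0. -/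
open scoped ComplexOrder

open Matrix BigOperators

/-!
A unitary `V` acts on the populations of a diagonal state `ρ = diag p` through the doubly
stochastic matrix `M j k = |V j k|²`, so `ΔE - μΔN = ∑ j, ε j ((M p) j - p j)` with
`ε = E - μN`. For Gibbs populations `p k ∝ exp (-ε k / T)`, the bound `1 - exp (-x) ≤ x`
gives `T (p k - p j) ≤ (ε j - ε k) p k`; weighting by `M j k` and summing, the left side
vanishes because `M` preserves sums and has unit row sums. Both entropy changes are therefore
non-negative, and two non-negative numbers that are opposite are zero.
-/

theorem Real.mul_sub_exp_neg_div_div_le (a b : ℝ) {T Z : ℝ} (hT : 0 < T) (hZ : 0 ≤ Z) :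
    T * (exp (-a / T) / Z - exp (-b / T) / Z) ≤ (b - a) * (exp (-a / T) / Z) := by
  have hexp : exp (-b / T) = exp (-((b - a) / T)) * exp (-a / T) := by
    rw [← exp_add]; ring_nf
  calc T * (exp (-a / T) / Z - exp (-b / T) / Z)
      = T * (exp (-a / T) / Z) * (1 - exp (-((b - a) / T))) := by rw [hexp]; ring
    _ ≤ T * (exp (-a / T) / Z) * ((b - a) / T) :=
        mul_le_mul_of_nonneg_left (by linarith [one_sub_le_exp_neg ((b - a) / T)]) (by positivity)
    _ = (b - a) * (exp (-a / T) / Z) := by field_simp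

namespace Matrix

variable {n : Type*} [Fintype n] [DecidableEq n]

theorem normSq_mem_doublyStochastic {V : Matrix n n ℂ} (hV : V ∈ unitaryGroup n ℂ) :
    (of fun j k => Complex.normSq (V j k)) ∈ doublyStochastic ℝ n := by
  refine mem_doublyStochastic_iff_sum.2
    ⟨fun j k => Complex.normSq_nonneg _, fun j => ?_, fun k => ?_⟩
  · have h := congrArg (fun A : Matrix n n ℂ => (A j j).re) (mem_unitaryGroup_iff.1 hV)
    simpa [mul_apply, Complex.mul_conj, ← Complex.ofReal_sum] using h
  · have h := congrArg (fun A : Matrix n n ℂ => (A k k).re) (mem_unitaryGroup_iff'.1 hV)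
    simpa [mul_apply, ← Complex.normSq_eq_conj_mul_self, ← Complex.ofReal_sum] using h

theorem re_mul_diagonal_mul_conjTranspose_apply_self (V : Matrix n n ℂ) (p : n → ℝ) (j : n) :
    ((V * diagonal (fun k => (p k : ℂ)) * Vᴴ) j j).re
      = ((of fun j k => Complex.normSq (V j k)) *ᵥ p) j := by
  have hterm : ∀ k, V j k * p k * star (V j k) = (Complex.normSq (V j k) * p k : ℝ) :=
    fun k => by rw [mul_right_comm, Complex.star_def, Complex.mul_conj, Complex.ofReal_mul]
  rw [mul_apply]
  simp only [mul_diagonal, conjTranspose_apply, hterm, ← Complex.ofReal_sum, Complex.ofReal_re]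
  rfl

theorem sum_mul_mulVec_sub_nonneg_of_mem_doublyStochastic {M : Matrix n n ℝ}
    (hM : M ∈ doublyStochastic ℝ n) {ε p : n → ℝ} {T : ℝ}
    (h : ∀ j k, T * (p k - p j) ≤ (ε j - ε k) * p k) :
    0 ≤ ∑ j, ε j * ((M *ᵥ p) j - p j) := by
  have hrow : ∀ g : n → ℝ, ∑ j, ∑ k, M j k * g j = ∑ j, g j := fun g => by
    simp only [← Finset.sum_mul, sum_row_of_mem_doublyStochastic hM, one_mul]
  have hcol : ∀ g : n → ℝ, ∑ j, ∑ k, M j k * g k = ∑ k, g k := fun g =>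
    sum_mulVec_of_mem_doublyStochastic hM
  calc (0 : ℝ) = ∑ j, ∑ k, M j k * (T * (p k - p j)) := by
        simp only [mul_sub, mul_left_comm _ T, Finset.sum_sub_distrib, ← Finset.mul_sum, hrow,
          hcol]
        ring
    _ ≤ ∑ j, ∑ k, M j k * ((ε j - ε k) * p k) :=
        Finset.sum_le_sum fun j _ => Finset.sum_le_sum fun k _ =>
          mul_le_mul_of_nonneg_left (h j k) (nonneg_of_mem_doublyStochastic hM)
    _ = ∑ j, ε j * (M *ᵥ p) j - ∑ j, ∑ k, M j k * (ε k * p k) := by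
        rw [← Finset.sum_sub_distrib]
        refine Finset.sum_congr rfl fun j _ => ?_
        simp only [mulVec, dotProduct, Finset.mul_sum, ← Finset.sum_sub_distrib]
        exact Finset.sum_congr rfl fun k _ => by ring
    _ = ∑ j, ε j * ((M *ᵥ p) j - p j) := by
        rw [hcol fun k => ε k * p k, ← Finset.sum_sub_distrib]
        simp only [mul_sub]

theorem sum_mul_re_unitary_conj_diagonal_sub_nonneg
    {V : Matrix n n ℂ} (hV : V ∈ unitaryGroup n ℂ) {ε p : n → ℝ} {T : ℝ}
    (h : ∀ j k, T * (p k - p j) ≤ (ε j - ε k) * p k) :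
    0 ≤ ∑ j, ε j * (((V * diagonal (fun k => (p k : ℂ)) * Vᴴ) j j).re
      - (diagonal (fun k => (p k : ℂ)) j j).re) := by
  simp only [re_mul_diagonal_mul_conjTranspose_apply_self, diagonal_apply_eq, Complex.ofReal_re]
  exact sum_mul_mulVec_sub_nonneg_of_mem_doublyStochastic (normSq_mem_doublyStochastic hV) h

end Matrix

/-- No Thouless pump for entropy: for two independent edges, each in a grand canonical
Gibbs state transformed by a spectrum-preserving (unitary) map, the entropy changes
`ΔS = (ΔE − μΔN)/T` of both edges are non-negative; if moreover `ΔS_t = −ΔS_b` (entropy is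
pumped from one edge to the other), then both entropy changes vanish. -/
theorem no_entropy_thouless_pump
    {It Ib : Type*} [Fintype It] [DecidableEq It] [Fintype Ib] [DecidableEq Ib]
    (Et Nt : It → ℝ) (μt Tt : ℝ) (hTt : 0 < Tt)
    (Eb Nb : Ib → ℝ) (μb Tb : ℝ) (hTb : 0 < Tb)
    (Zt : ℝ) (hZt : Zt = ∑ j, Real.exp (-(Et j - μt * Nt j) / Tt))
    (Zb : ℝ) (hZb : Zb = ∑ i, Real.exp (-(Eb i - μb * Nb i) / Tb))
    (ρt : Matrix It It ℂ)
    (hρt : ρt = Matrix.diagonal fun j => ((Real.exp (-(Et j - μt * Nt j) / Tt) / Zt : ℝ) : ℂ))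
    (ρb : Matrix Ib Ib ℂ)
    (hρb : ρb = Matrix.diagonal fun i => ((Real.exp (-(Eb i - μb * Nb i) / Tb) / Zb : ℝ) : ℂ))
    (σt : Matrix It It ℂ)
    (hσt : ∃ V : Matrix It It ℂ, V ∈ Matrix.unitaryGroup It ℂ ∧ σt = V * ρt * Vᴴ)
    (σb : Matrix Ib Ib ℂ)
    (hσb : ∃ V : Matrix Ib Ib ℂ, V ∈ Matrix.unitaryGroup Ib ℂ ∧ σb = V * ρb * Vᴴ)
    (ΔSt ΔSb : ℝ)
    (hΔSt : ΔSt = (∑ j, (Et j - μt * Nt j) * ((σt j j).re - (ρt j j).re)) / Tt)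
    (hΔSb : ΔSb = (∑ i, (Eb i - μb * Nb i) * ((σb i i).re - (ρb i i).re)) / Tb) :
    0 ≤ ΔSt ∧ 0 ≤ ΔSb ∧ (ΔSt = -ΔSb → ΔSt = 0 ∧ ΔSb = 0) := by
  obtain ⟨Vt, hVt, rfl⟩ := hσt
  obtain ⟨Vb, hVb, rfl⟩ := hσb
  have hZt₀ : 0 ≤ Zt := hZt ▸ Finset.sum_nonneg fun j _ => (Real.exp_pos _).le
  have hZb₀ : 0 ≤ Zb := hZb ▸ Finset.sum_nonneg fun i _ => (Real.exp_pos _).le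
  subst hρt hρb
  have ht := sum_mul_re_unitary_conj_diagonal_sub_nonneg hVt (ε := fun j => Et j - μt * Nt j)
    fun j k => Real.mul_sub_exp_neg_div_div_le _ _ hTt hZt₀
  have hb := sum_mul_re_unitary_conj_diagonal_sub_nonneg hVb (ε := fun i => Eb i - μb * Nb i)
    fun j k => Real.mul_sub_exp_neg_div_div_le _ _ hTb hZb₀
  have hSt : 0 ≤ ΔSt := hΔSt ▸ div_nonneg ht hTt.le
  have hSb : 0 ≤ ΔSb := hΔSb ▸ div_nonneg hb hTb.le
  exact ⟨hSt, hSb, fun hpump => ⟨by linarith, by linarith⟩⟩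
end
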